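/- Let Λ be the rank-2 lattice with Gram matrix [[2a, 2m],[2m, 2b]] where a ≥ 0, m ≥ 0, b < 0 are integers with m^2 > ab and 2 ∤ a. Let Σ_6 be the rank-7 lattice with generators A, E1, ..., E6 and diagonal Gram matrix diag(2, -2, -2, -2, -2, -2, -2). Write -b = m1^2 + ... + m5^2 with gcd(m1,...,m5) = 1. Then the map σ sending F1 ↦ ((a+1)/2)(A - E6) + E6 and F2 ↦ m(A - E6) - (m1 E1 + ... + m5 E5) is a primitive embedding of lattices, i.e., it is injective, preserves the bilinear form, and has torsion-free cokernel. -/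

import Mathlib

/-
Write `σ x = x ᵥ* E`, the rows of `E` being the images of `F1` and `F2`. The `A`- and
`E6`-coordinates of `σ x` add up to `x 0`, and its `E1, …, E5`-coordinates are `-x 1 * mᵢ`, so a
Bézout relation `Σ uᵢ mᵢ = 1` gives an integral matrix `R` with `E * R = 1`: `σ` has a ℤ-linear
left inverse `π`. This makes `σ` injective and its image saturated, since `n • y = σ x` gives
`n • σ (π y) = σ (π (σ x)) = n • y` in the torsion-free group `ℤ⁷`. The isometry is a direct
computation from `a = 2 * ((a + 1) / 2) - 1` and `-b = Σ mᵢ²`.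
-/

/-- The bilinear form of the lattice `Σ₆ = ⟨2⟩ ⊕ ⟨-2⟩⁶` with basis `A, E1, ..., E6`. -/
def formSigma6 (u v : Fin 7 → ℤ) : ℤ :=
  2 * u 0 * v 0 -
    2 * (u 1 * v 1 + u 2 * v 2 + u 3 * v 3 + u 4 * v 4 + u 5 * v 5 + u 6 * v 6)

/-- The bilinear form of the rank-2 lattice with Gram matrix `[[2a, 2m],[2m, 2b]]`. -/
def formLambda (a m b : ℤ) (x y : Fin 2 → ℤ) : ℤ :=
  2 * a * x 0 * y 0 + 2 * m * (x 0 * y 1 + x 1 * y 0) + 2 * b * x 1 * y 1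

theorem LinearMap.mem_range_of_smul_mem_range {R M N : Type*} [Semiring R] [IsCancelMulZero R]
    [AddCommMonoid M] [AddCommMonoid N] [Module R M] [Module R N] [Module.IsTorsionFree R N]
    {f : M →ₗ[R] N} {g : N →ₗ[R] M} (hgf : Function.LeftInverse g f) {n : R} (hn : n ≠ 0)
    {y : N} (hy : n • y ∈ LinearMap.range f) : y ∈ LinearMap.range f := by
  obtain ⟨x, hx⟩ := hy
  refine ⟨g y, smul_right_injective N hn ?_⟩
  calc n • f (g y) = f (g (n • y)) := by rw [map_smul, map_smul]
    _ = n • y := by rw [← hx, hgf x]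

theorem exists_int_linear_combination_eq_gcd₅ (m₁ m₂ m₃ m₄ m₅ : ℕ) :
    ∃ u₁ u₂ u₃ u₄ u₅ : ℤ, u₁ * m₁ + u₂ * m₂ + u₃ * m₃ + u₄ * m₄ + u₅ * m₅ =
      Nat.gcd m₁ (Nat.gcd m₂ (Nat.gcd m₃ (Nat.gcd m₄ m₅))) := by
  set g₄ := Nat.gcd m₄ m₅
  set g₃ := Nat.gcd m₃ g₄
  set g₂ := Nat.gcd m₂ g₃
  refine ⟨Nat.gcdA m₁ g₂, Nat.gcdB m₁ g₂ * Nat.gcdA m₂ g₃,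
    Nat.gcdB m₁ g₂ * Nat.gcdB m₂ g₃ * Nat.gcdA m₃ g₄,
    Nat.gcdB m₁ g₂ * Nat.gcdB m₂ g₃ * Nat.gcdB m₃ g₄ * Nat.gcdA m₄ m₅,
    Nat.gcdB m₁ g₂ * Nat.gcdB m₂ g₃ * Nat.gcdB m₃ g₄ * Nat.gcdB m₄ m₅, ?_⟩
  rw [Nat.gcd_eq_gcd_ab m₁, Nat.gcd_eq_gcd_ab m₂, Nat.gcd_eq_gcd_ab m₃, Nat.gcd_eq_gcd_ab m₄]
  ring

open Matrix

def sigma6EmbeddingMatrix (k m μ₁ μ₂ μ₃ μ₄ μ₅ : ℤ) : Matrix (Fin 2) (Fin 7) ℤ :=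
  !![k, 0, 0, 0, 0, 0, 1 - k; m, -μ₁, -μ₂, -μ₃, -μ₄, -μ₅, -m]

def sigma6RetractionMatrix (u₁ u₂ u₃ u₄ u₅ : ℤ) : Matrix (Fin 7) (Fin 2) ℤ :=
  !![1, 0; 0, -u₁; 0, -u₂; 0, -u₃; 0, -u₄; 0, -u₅; 1, 0]

theorem sigma6EmbeddingMatrix_mul_sigma6RetractionMatrix {k m μ₁ μ₂ μ₃ μ₄ μ₅ u₁ u₂ u₃ u₄ u₅ : ℤ}
    (h : u₁ * μ₁ + u₂ * μ₂ + u₃ * μ₃ + u₄ * μ₄ + u₅ * μ₅ = 1) :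
    sigma6EmbeddingMatrix k m μ₁ μ₂ μ₃ μ₄ μ₅ * sigma6RetractionMatrix u₁ u₂ u₃ u₄ u₅ = 1 := by
  ext i j
  fin_cases i <;> fin_cases j <;>
    simp only [sigma6EmbeddingMatrix, sigma6RetractionMatrix, Fin.zero_eta, Fin.mk_one, Fin.isValue,
      mul_apply, of_apply, cons_val', cons_val_fin_one, cons_val_zero, cons_val_one, cons_val_succ,
      Fin.sum_univ_succ, Finset.univ_unique, Fin.default_eq_zero, Finset.sum_const,
      Finset.card_singleton, Int.nsmul_eq_mul, Nat.cast_one,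
      mul_one, one_mul, mul_zero, zero_mul, mul_neg, neg_mul, neg_neg, neg_zero, add_zero, zero_add,
      add_sub_cancel, add_neg_cancel, one_apply_eq, one_apply_ne, ne_eq, zero_ne_one, one_ne_zero,
      not_false_eq_true]
  linear_combination h

theorem formSigma6_vecMul_sigma6EmbeddingMatrix {k m b μ₁ μ₂ μ₃ μ₄ μ₅ : ℤ}
    (hb : -b = μ₁ ^ 2 + μ₂ ^ 2 + μ₃ ^ 2 + μ₄ ^ 2 + μ₅ ^ 2) (x y : Fin 2 → ℤ) :
    formSigma6 (x ᵥ* sigma6EmbeddingMatrix k m μ₁ μ₂ μ₃ μ₄ μ₅)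
        (y ᵥ* sigma6EmbeddingMatrix k m μ₁ μ₂ μ₃ μ₄ μ₅) =
      formLambda (2 * k - 1) m b x y := by
  simp only [formSigma6, formLambda, vecMul, dotProduct, sigma6EmbeddingMatrix, Fin.isValue,
    of_apply, cons_val', cons_val_zero, cons_val_one, cons_val_succ, cons_val, cons_val_fin_one,
    Fin.sum_univ_succ, Finset.univ_unique, Fin.default_eq_zero, Finset.sum_singleton,
    Fin.succ_zero_eq_one]
  linear_combination (2 * x 1 * y 1) * hb

theorem stmt_5 (a m b : ℤ) (hodd : ¬ (2 ∣ a))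
    (m1 m2 m3 m4 m5 : ℕ)
    (hsum : -b = (m1 : ℤ) ^ 2 + (m2 : ℤ) ^ 2 + (m3 : ℤ) ^ 2 + (m4 : ℤ) ^ 2 + (m5 : ℤ) ^ 2)
    (hgcd : Nat.gcd m1 (Nat.gcd m2 (Nat.gcd m3 (Nat.gcd m4 m5))) = 1)
    (σ : (Fin 2 → ℤ) → (Fin 7 → ℤ))
    (hσ : ∀ x, σ x =
      x 0 • ![(a + 1) / 2, 0, 0, 0, 0, 0, 1 - (a + 1) / 2] +
      x 1 • ![m, -(m1 : ℤ), -(m2 : ℤ), -(m3 : ℤ), -(m4 : ℤ), -(m5 : ℤ), -m]) :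
    (∀ x y, formSigma6 (σ x) (σ y) = formLambda a m b x y) ∧
    Function.Injective σ ∧
    (∀ (y : Fin 7 → ℤ) (n : ℤ), n ≠ 0 → n • y ∈ Set.range σ → y ∈ Set.range σ) := by
  set E := sigma6EmbeddingMatrix ((a + 1) / 2) m m1 m2 m3 m4 m5
  have hσE : σ = E.vecMulLinear :=
    funext fun x => by rw [hσ, vecMulLinear_apply, vecMul_eq_sum, Fin.sum_univ_two]; rfl
  obtain ⟨u₁, u₂, u₃, u₄, u₅, hu⟩ := exists_int_linear_combination_eq_gcd₅ m1 m2 m3 m4 m5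
  rw [hgcd, Nat.cast_one] at hu
  set R := sigma6RetractionMatrix u₁ u₂ u₃ u₄ u₅
  have hRE : Function.LeftInverse R.vecMulLinear E.vecMulLinear := fun x => by
    rw [vecMulLinear_apply, vecMulLinear_apply, vecMul_vecMul,
      sigma6EmbeddingMatrix_mul_sigma6RetractionMatrix hu, vecMul_one]
  subst hσE
  refine ⟨fun x y => ?_, hRE.injective,
    fun y n hn hy => LinearMap.mem_range_of_smul_mem_range hRE hn hy⟩
  rw [show a = 2 * ((a + 1) / 2) - 1 by omega]
  exact formSigma6_vecMul_sigma6EmbeddingMatrix hsum x y
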